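/- Let d ∈ ℕ and α ∈ ℝ, and define V_{α,d}(x) := (4α² - (d-2)²)/(4(1+|x|²)) + (1 - (α+d/2)²)/(1+|x|²)² and ψ_{α,d}(x) := (1+|x|²)^{(2-d)/4 - α/2} on ℝ^d. Then ψ_{α,d} is smooth and strictly positive on ℝ^d and satisfies (-Δ + V_{α,d}) ψ_{α,d}(x) = 0 pointwise for every x ∈ ℝ^d. -/
import Mathlib


open MeasureTheory Real Filter Finset
open scoped RealInnerProductSpace ENNReal Topology

/-- Iterated exponential: `iterExp 0 = 0`, `iterExp (n+1) = exp (iterExp n)`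
(the `e_n` of the paper). -/
noncomputable def iterExp : ℕ → ℝ
  | 0 => 0
  | n + 1 => Real.exp (iterExp n)

/-- Iterated logarithm: `iterLog 1 r = log r`, `iterLog (n+1) r = log (iterLog n r)`
(the `ln_n` of the paper). -/
noncomputable def iterLog : ℕ → ℝ → ℝ
  | 0, r => r
  | n + 1, r => Real.log (iterLog n r)

/-- The Euclidean Laplacian `Δ f x = ∑ i, ∂²f/∂x_i² (x)`. -/
noncomputable def lap {d : ℕ} (f : EuclideanSpace ℝ (Fin d) → ℝ)
    (x : EuclideanSpace ℝ (Fin d)) : ℝ :=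
  ∑ i : Fin d, fderiv ℝ (fun y => fderiv ℝ f y (EuclideanSpace.single i 1)) x
    (EuclideanSpace.single i 1)

/-- The example potential `V_{α,d}`. -/
noncomputable def Vad (d : ℕ) (α : ℝ) (x : EuclideanSpace ℝ (Fin d)) : ℝ :=
  (4 * α ^ 2 - ((d : ℝ) - 2) ^ 2) / (4 * (1 + ‖x‖ ^ 2))
    + (1 - (α + (d : ℝ) / 2) ^ 2) / (1 + ‖x‖ ^ 2) ^ 2

/-- The zero-energy state `ψ_{α,d}(x) = (1+|x|²)^{(2-d)/4-α/2}`. -/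
noncomputable def psiAd (d : ℕ) (α : ℝ) (x : EuclideanSpace ℝ (Fin d)) : ℝ :=
  (1 + ‖x‖ ^ 2) ^ ((2 - (d : ℝ)) / 4 - α / 2)

/-- `ψ_{α,d}` is smooth, strictly positive, and satisfies
`(-Δ + V_{α,d}) ψ_{α,d} = 0` pointwise on `ℝ^d`. -/
theorem psiAd_zero_energy (d : ℕ) (hd : 0 < d) (α : ℝ) :
    ContDiff ℝ (⊤ : ℕ∞) (psiAd d α) ∧ (∀ x, 0 < psiAd d α x) ∧
    ∀ x : EuclideanSpace ℝ (Fin d),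
      -lap (psiAd d α) x + Vad d α x * psiAd d α x = 0 := by
  set β : ℝ := (2 - (d:ℝ)) / 4 - α / 2 with hβ
  have hg : ∀ x : EuclideanSpace ℝ (Fin d), (0:ℝ) < 1 + ‖x‖^2 := fun x => by positivity
  have hQ : ∀ x : EuclideanSpace ℝ (Fin d),
      HasFDerivAt (fun y : EuclideanSpace ℝ (Fin d) => 1 + ‖y‖^2) (2 • (innerSL ℝ x)) x :=
    fun x => ((hasStrictFDerivAt_norm_sq x).hasFDerivAt).const_add 1
  have hpsi : ∀ x, HasFDerivAt (psiAd d α)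
      ((β * (1+‖x‖^2) ^ (β-1)) • (2 • innerSL ℝ x)) x :=
    fun x => (hQ x).rpow_const (Or.inl (hg x).ne')
  have hfd : ∀ x v, fderiv ℝ (psiAd d α) x v = 2 * β * (1+‖x‖^2) ^ (β-1) * ⟪x, v⟫ := by
    intro x v
    rw [(hpsi x).fderiv]
    simp only [ContinuousLinearMap.smul_apply, innerSL_apply_apply, smul_eq_mul, nsmul_eq_mul,
      Nat.cast_ofNat]
    ring
  set F : EuclideanSpace ℝ (Fin d) → ℝ := fun y => 2 * β * (1+‖y‖^2) ^ (β-1) with hFdef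
  have hF : ∀ x, HasFDerivAt F
      ((2*β*(β-1) * (1+‖x‖^2) ^ (β-2)) • (2 • innerSL ℝ x)) x := by
    intro x
    have h := (((hQ x).rpow_const (p := β-1) (Or.inl (hg x).ne'))).const_mul (2*β)
    have heq : ((2*β) • (((β - 1) * (1 + ‖x‖ ^ 2) ^ (β - 1 - 1)) • (2 • innerSL ℝ x)))
        = (2*β*(β-1) * (1+‖x‖^2) ^ (β-2)) • (2 • innerSL ℝ x) := by
      ext v
      simp only [ContinuousLinearMap.smul_apply, smul_eq_mul, nsmul_eq_mul, Nat.cast_ofNat,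
        innerSL_apply_apply, show β - 1 - 1 = β - 2 by ring]
      ring
    exact heq ▸ h
  have hsecond : ∀ (i : Fin d) (x : EuclideanSpace ℝ (Fin d)),
      fderiv ℝ (fun y => fderiv ℝ (psiAd d α) y (EuclideanSpace.single i 1)) x
        (EuclideanSpace.single i 1)
        = 4*β*(β-1)*(1+‖x‖^2) ^ (β-2) * (x i)^2 + F x := by
    intro i x
    have hfun : (fun y => fderiv ℝ (psiAd d α) y (EuclideanSpace.single i 1))
        = fun y => F y * (y i) := by
      funext y
      rw [hfd y, real_inner_comm, EuclideanSpace.inner_single_left]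
      simp [hFdef]
    have hprod : HasFDerivAt (fun y : EuclideanSpace ℝ (Fin d) => F y * y i)
        (F x • (EuclideanSpace.proj i : EuclideanSpace ℝ (Fin d) →L[ℝ] ℝ)
          + (x i) • ((2*β*(β-1) * (1+‖x‖^2) ^ (β-2)) • (2 • innerSL ℝ x))) x :=
      (hF x).mul ((EuclideanSpace.proj i : EuclideanSpace ℝ (Fin d) →L[ℝ] ℝ).hasFDerivAt)
    rw [hfun, hprod.fderiv]
    have hp : (EuclideanSpace.proj i : EuclideanSpace ℝ (Fin d) →L[ℝ] ℝ)
        (EuclideanSpace.single i 1) = 1 := by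
      show (EuclideanSpace.single i (1:ℝ)) i = 1
      simp
    simp only [ContinuousLinearMap.add_apply, ContinuousLinearMap.smul_apply, smul_eq_mul,
      nsmul_eq_mul, Nat.cast_ofNat, innerSL_apply_apply, hp]
    rw [real_inner_comm, EuclideanSpace.inner_single_left]
    simp only [RCLike.inner_apply, starRingEnd_apply, star_trivial, one_mul, mul_one]
    ring
  -- conclusion pieces
  have hsmooth : ContDiff ℝ (⊤ : ℕ∞) (psiAd d α) := by
    rw [contDiff_iff_contDiffAt]
    intro x
    exact (contDiffAt_const.add (contDiff_norm_sq ℝ (E := EuclideanSpace ℝ (Fin d))).contDiffAt).rpow_const_of_ne (hg x).ne'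
  have hpos : ∀ x, 0 < psiAd d α x := fun x => Real.rpow_pos_of_pos (hg x) _
  refine ⟨hsmooth, hpos, fun x => ?_⟩
  have hsum : ∑ i, (x i)^2 = ‖x‖^2 := by
    rw [EuclideanSpace.norm_eq, Real.sq_sqrt (by positivity)]
    simp [sq_abs]
  have hlap : lap (psiAd d α) x
      = 4*β*(β-1)*(1+‖x‖^2) ^ (β-2) * ‖x‖^2 + d * F x := by
    unfold lap
    rw [Finset.sum_congr rfl (fun i _ => hsecond i x), Finset.sum_add_distrib,
      ← Finset.mul_sum, hsum, Finset.sum_const, Finset.card_univ]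
    simp [nsmul_eq_mul]
  rw [hlap]
  have hg0 : (1 : ℝ) + ‖x‖^2 ≠ 0 := (hg x).ne'
  have h1 : (1+‖x‖^2) ^ (β-1) = (1+‖x‖^2) ^ β / (1+‖x‖^2) := by
    rw [Real.rpow_sub (hg x), Real.rpow_one]
  have h2 : (1+‖x‖^2) ^ (β-2) = (1+‖x‖^2) ^ β / ((1+‖x‖^2) * (1+‖x‖^2)) := by
    rw [Real.rpow_sub (hg x), show (2:ℝ) = 1+1 by norm_num, Real.rpow_add (hg x),
      Real.rpow_one]
  simp only [Vad, psiAd, hFdef, h1, h2]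
  rw [hβ]
  field_simp
  ring
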